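/- Let C ⊆ F_q^n be a linear code of dimension k. For 0 ≤ j ≤ k, 0 ≤ r ≤ n, let β̂_j(C,r) be the number of r-subsets S with dim(C(S)) = j, and let W_ℓ(D) be the number of codewords of Hamming weight ℓ in a code D. Then for every m ≥ 0: sum_{j=0}^{k} q^{jm} β̂_j(C,r) = sum_{ℓ=0}^{n} binom(n−ℓ, r−ℓ) W_ℓ(C ⊗_{F_q} F_{q^m}). -/

import Mathlib

/-- Gaussian binomial coefficient as a polynomial in `q`, evaluated at an integer. -/
def qb (q : ℤ) : ℕ → ℕ → ℤ
  | _, 0 => 1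
  | 0, _+1 => 0
  | n+1, k+1 => qb q n k + q ^ (k+1) * qb q n (k+1)

/-- Hamming weight of a vector. -/
noncomputable def hamWt {R : Type*} [Zero R] {n : ℕ} (x : Fin n → R) : ℕ :=
  Nat.card {i : Fin n // x i ≠ 0}

/-- The `n`-th harmonic number. -/
noncomputable def harm (n : ℕ) : ℝ := ∑ i ∈ Finset.range n, (1 : ℝ) / (i + 1)

/-- Expected number of i.i.d. uniform draws of columns of `G` (with replacement)
until the drawn columns span `F^k`, written as `∑_{t≥0} P(T > t)`. -/
noncomputable def coverDepth {F : Type*} [Field F] {k n : ℕ}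
    (G : Matrix (Fin k) (Fin n) F) : ℝ :=
  ∑' t : ℕ, (Nat.card {f : Fin t → Fin n //
      Submodule.span F (Set.range fun i => fun r => G r (f i)) ≠ ⊤} : ℝ) / (n : ℝ) ^ t

/-- Vectors whose support is contained in the finite set `S`. -/
def zeroOutside (F : Type*) [Field F] (n : ℕ) (S : Finset (Fin n)) :
    Submodule F (Fin n → F) where
  carrier := {x | ∀ i ∉ S, x i = 0}
  add_mem' := by intro a b ha hb i hi; simp [ha i hi, hb i hi]
  zero_mem' := by intro i hi; rfl
  smul_mem' := by intro c a ha i hi; simp [ha i hi]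

/-- The dual code with respect to the standard bilinear form. -/
def dualCode (F : Type*) [Field F] (n : ℕ) (C : Submodule F (Fin n → F)) :
    Submodule F (Fin n → F) where
  carrier := {y | ∀ x ∈ C, ∑ i, x i * y i = 0}
  add_mem' := by
    intro a b ha hb x hx
    simp only [Pi.add_apply, mul_add, Finset.sum_add_distrib, ha x hx, hb x hx, add_zero]
  zero_mem' := by intro x hx; simp
  smul_mem' := by
    intro c a ha x hx
    simp only [Pi.smul_apply, smul_eq_mul, mul_left_comm, ← Finset.mul_sum, ha x hx, mul_zero]

/-- Projection onto the coordinates indexed by `S`. -/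
def projS (F : Type*) [Field F] {n : ℕ} (S : Finset (Fin n)) :
    (Fin n → F) →ₗ[F] ({x // x ∈ S} → F) :=
  LinearMap.funLeft F F (fun i => (i : Fin n))

/-- The extension code of `C` over an extension field `E`. -/
def extCode {F E : Type*} [Field F] [Field E] [Algebra F E] {n : ℕ}
    (C : Submodule F (Fin n → F)) : Submodule E (Fin n → E) :=
  Submodule.span E ((fun c : Fin n → F => fun i => algebraMap F E (c i)) '' C)

/-!
Double count the pairs `(S, x)` with `#S = r`, `x ∈ extCode C` and `x` vanishing off `S`.
Expanding each coordinate of `x` in an `F`-basis of `E` identifies the words `x` vanishing off `S`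
with `m`-tuples of codewords of `C ⊓ zeroOutside F n S`, so each `S` carries
`q ^ (m * dim (C ⊓ zeroOutside F n S))` of them; a fixed `x` of weight `ℓ` vanishes off exactly
`(n - ℓ).choose (r - ℓ)` sets `S` of size `r`.
-/

open Finset

theorem sum_range_mul_natCard_fiber {α : Type*} [Fintype α] (p : α → Prop) [DecidablePred p]
    (f : α → ℕ) (w : ℕ → ℕ) {K : ℕ} (hf : ∀ a, p a → f a ≤ K) :
    ∑ j ∈ range (K + 1), w j * Nat.card {a // p a ∧ f a = j} =
      ∑ a ∈ univ.filter p, w (f a) := by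
  have hmaps : ∀ a ∈ univ.filter p, f a ∈ range (K + 1) := fun a ha =>
    mem_range_succ_iff.mpr (hf a (mem_filter.mp ha).2)
  rw [← sum_fiberwise_of_maps_to hmaps]
  refine sum_congr rfl fun j _ => ?_
  rw [sum_congr rfl fun a ha => by rw [(mem_filter.mp ha).2], sum_const, smul_eq_mul, mul_comm,
    filter_filter, Nat.card_eq_fintype_card, Fintype.card_subtype]

theorem card_filter_card_eq_and_superset {α : Type*} [Fintype α] [DecidableEq α]
    (A : Finset α) (r : ℕ) :
    #{S : Finset α | S.card = r ∧ A ⊆ S} =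
      if #A ≤ r then (Fintype.card α - #A).choose (r - #A) else 0 := by
  split_ifs with hA
  · rw [← card_univ, ← card_filter_powersetCard_subset A univ r (subset_univ A) hA]
    congr 1
    ext S
    simp
  · refine card_eq_zero.mpr (filter_eq_empty_iff.mpr ?_)
    rintro S - ⟨rfl, hAS⟩
    exact hA (card_le_card hAS)

section ExtensionCode

variable {F E ι : Type*} [Field F] [Field E] [Algebra F E] [Fintype ι] {n : ℕ}

theorem mem_extCode_iff [DecidableEq ι] (e : Module.Basis ι F E) {C : Submodule F (Fin n → F)}
    {x : Fin n → E} : x ∈ extCode C ↔ ∀ t, (fun i => e.repr (x i) t) ∈ C := by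
  constructor
  · intro hx
    induction hx using Submodule.span_induction with
    | mem x hx =>
      obtain ⟨c, hc, rfl⟩ := hx
      intro t
      convert C.smul_mem (e.repr 1 t) hc using 1
      ext i
      simp [Algebra.algebraMap_eq_smul_one, mul_comm]
    | zero => simp only [map_zero, Finsupp.coe_zero, Pi.zero_apply]; exact fun _ => C.zero_mem
    | add x y _ _ hx hy => exact fun t => by simpa [Pi.add_def] using C.add_mem (hx t) (hy t)
    | smul a x _ hx =>
      -- multiplication by `a` acts on coordinates through its left-multiplication matrix
      intro t
      convert C.sum_mem (t := univ) fun s _ =>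
        C.smul_mem (Algebra.leftMulMatrix e a t s) (hx s) using 1
      ext i
      simp [← Algebra.leftMulMatrix_mulVec_repr, Matrix.mulVec, dotProduct]
  · intro hx
    have hsum : x = ∑ t, e t • fun i => algebraMap F E (e.repr (x i) t) := by
      ext i
      simp [mul_comm, ← Algebra.smul_def, e.sum_repr]
    rw [hsum]
    exact Submodule.sum_mem _ fun t _ =>
      Submodule.smul_mem _ _ (Submodule.subset_span ⟨_, hx t, rfl⟩)

theorem mem_zeroOutside {S : Finset (Fin n)} {x : Fin n → F} :
    x ∈ zeroOutside F n S ↔ ∀ i ∉ S, x i = 0 :=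
  Iff.rfl

theorem natCard_extCode_supported [Finite F] [FiniteDimensional F E]
    (C : Submodule F (Fin n → F)) (S : Finset (Fin n)) :
    Nat.card {x : Fin n → E // x ∈ extCode C ∧ ∀ i ∉ S, x i = 0} =
      Nat.card F ^ (Module.finrank F ↥(C ⊓ zeroOutside F n S) * Module.finrank F E) := by
  set d := Module.finrank F E
  let e : Module.Basis (Fin d) F E := Module.finBasis F E
  let coords : (Fin n → E) ≃ (Fin d → Fin n → F) :=
    (Equiv.piCongrRight fun _ => e.equivFun.toEquiv).trans (Equiv.piComm _)
  have hcoords : ∀ x, (x ∈ extCode C ∧ ∀ i ∉ S, x i = 0) ↔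
      ∀ t, coords x t ∈ C ⊓ zeroOutside F n S := by
    intro x
    have hzero : ∀ i, x i = 0 ↔ ∀ t, e.repr (x i) t = 0 := fun i => by
      rw [← e.repr.map_eq_zero_iff, Finsupp.ext_iff]
      rfl
    simp only [Submodule.mem_inf, forall_and, mem_extCode_iff e, mem_zeroOutside, hzero]
    exact and_congr Iff.rfl ⟨fun h t i hi => h i hi t, fun h i hi t => h t i hi⟩
  calc Nat.card {x : Fin n → E // x ∈ extCode C ∧ ∀ i ∉ S, x i = 0}
      = Nat.card {y : Fin d → Fin n → F // ∀ t, y t ∈ C ⊓ zeroOutside F n S} :=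
        Nat.card_congr (coords.subtypeEquiv hcoords)
    _ = Nat.card (Fin d → ↥(C ⊓ zeroOutside F n S)) :=
        Nat.card_congr Equiv.subtypePiEquivPi
    _ = _ := by rw [Nat.card_fun, Module.natCard_eq_pow_finrank (K := F), ← pow_mul, Nat.card_fin]

end ExtensionCode

section HammingWeight

variable {R : Type*} [Zero R] {n : ℕ}

theorem hamWt_le (x : Fin n → R) : hamWt x ≤ n :=
  (Finite.card_subtype_le _).trans_eq (Nat.card_fin n)

theorem card_filter_card_eq_and_supported [DecidableEq R] (x : Fin n → R) (r : ℕ) :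
    #{S : Finset (Fin n) | S.card = r ∧ ∀ i ∉ S, x i = 0} =
      if hamWt x ≤ r then (n - hamWt x).choose (r - hamWt x) else 0 := by
  have hwt : hamWt x = #{i | x i ≠ 0} := by
    rw [hamWt, Nat.card_eq_fintype_card, Fintype.card_subtype]
  have hsupported (S : Finset (Fin n)) :
      (∀ i ∉ S, x i = 0) ↔ ({i | x i ≠ 0} : Finset (Fin n)) ⊆ S := by
    simp only [subset_iff, mem_filter, mem_univ, true_and]
    exact forall_congr' fun i => not_imp_comm
  simpa only [hwt, Fintype.card_fin, hsupported] using
    card_filter_card_eq_and_superset {i | x i ≠ 0} r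

end HammingWeight

theorem stmt18_general {F E : Type*} [Field F] [Fintype F] [Field E] [Algebra F E]
    {n k m r : ℕ} (hm : 1 ≤ m) (hE : Module.finrank F E = m)
    (C : Submodule F (Fin n → F)) (hC : Module.finrank F C = k) :
    ∑ j ∈ Finset.range (k + 1), Fintype.card F ^ (j * m) *
        Nat.card {S : Finset (Fin n) // S.card = r ∧
          Module.finrank F ↥(C ⊓ zeroOutside F n S) = j} =
      ∑ ℓ ∈ Finset.range (n + 1),
        (if ℓ ≤ r then (n - ℓ).choose (r - ℓ) else 0) *
          Nat.card {x : Fin n → E // x ∈ extCode C ∧ hamWt x = ℓ} := by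
  classical
  have : FiniteDimensional F E := .of_finrank_pos (by omega)
  have : Finite E := Module.finite_of_finite F
  have : Fintype E := Fintype.ofFinite E
  let words : Finset (Fin n → E) := {x | x ∈ extCode C}
  let sets : Finset (Finset (Fin n)) := {S | S.card = r}
  let supported (S : Finset (Fin n)) (x : Fin n → E) : Prop := ∀ i ∉ S, x i = 0
  rw [sum_range_mul_natCard_fiber _ _ _ fun S _ => hC ▸ Submodule.finrank_mono inf_le_left,
    sum_range_mul_natCard_fiber _ _ _ fun x _ => hamWt_le x]
  calc ∑ S ∈ sets, Fintype.card F ^ (Module.finrank F ↥(C ⊓ zeroOutside F n S) * m)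
      = ∑ S ∈ sets, #(words.bipartiteAbove supported S) := by
        refine sum_congr rfl fun S _ => ?_
        rw [← Nat.card_eq_fintype_card, ← hE, ← natCard_extCode_supported (E := E),
          bipartiteAbove, filter_filter, Nat.card_eq_fintype_card, Fintype.card_subtype]
    _ = ∑ x ∈ words, #(sets.bipartiteBelow supported x) :=
        sum_card_bipartiteAbove_eq_sum_card_bipartiteBelow _
    _ = _ := sum_congr rfl fun x _ => by
        rw [← card_filter_card_eq_and_supported, bipartiteBelow, filter_filter]

theorem stmt18 {F E : Type*} [Field F] [Fintype F] [Field E] [Algebra F E]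
    {n k m r : ℕ} (hm : 1 ≤ m) (hE : Module.finrank F E = m)
    (C : Submodule F (Fin n → F)) (hC : Module.finrank F C = k) (hr : r ≤ n) :
    ∑ j ∈ Finset.range (k + 1), Fintype.card F ^ (j * m) *
        Nat.card {S : Finset (Fin n) // S.card = r ∧
          Module.finrank F ↥(C ⊓ zeroOutside F n S) = j} =
      ∑ ℓ ∈ Finset.range (n + 1),
        (if ℓ ≤ r then (n - ℓ).choose (r - ℓ) else 0) *
          Nat.card {x : Fin n → E // x ∈ extCode C ∧ hamWt x = ℓ} :=
  stmt18_general hm hE C hC
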